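/- Let Φ be a crystallographic root system. Any summable finite subset X ⊆ Φ with no vanishing subsum admits at least p distinct summable subsets of cardinality |X| - p + 1, for any 1 ≤ p ≤ |X|. -/

import Mathlib

open Pointwise

structure RootSys (V : Type*) [NormedAddCommGroup V] [InnerProductSpace ℝ V] where
  Φ : Set V
  finite : Φ.Finite
  nonzero : ∀ α ∈ Φ, α ≠ (0 : V)
  line : ∀ α ∈ Φ, Φ ∩ {x : V | ∃ t : ℝ, x = t • α} = {α, -α}
  reflect : ∀ α ∈ Φ, ∀ β ∈ Φ, β - (2 * (inner ℝ α β : ℝ) / (inner ℝ α α : ℝ)) • α ∈ Φ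

variable {V : Type*} [NormedAddCommGroup V] [InnerProductSpace ℝ V]

/-- `Φ` is crystallographic: `⟨α^∨, β⟩ ∈ ℤ` for all roots `α, β`. -/
def RootSys.IsCrystallographic (R : RootSys V) : Prop :=
  ∀ α ∈ R.Φ, ∀ β ∈ R.Φ, ∃ n : ℤ, 2 * (inner ℝ α β : ℝ) / (inner ℝ α α : ℝ) = (n : ℝ)

/-- A subset `S ⊆ Φ` is closed if it is stable under sums of two elements staying in `Φ`. -/
def RootSys.IsClosedSubset (R : RootSys V) (S : Set V) : Prop :=
  ∀ α ∈ S, ∀ β ∈ S, α + β ∈ R.Φ → α + β ∈ S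

/-- A set of roots is antisymmetric if it never contains both `α` and `-α`. -/
def IsAntisymSet (S : Set V) : Prop := ∀ α ∈ S, -α ∉ S

/-- A `Φ`-poset: an antisymmetric closed subset of `Φ`. -/
def RootSys.IsPoset (R : RootSys V) (S : Set V) : Prop :=
  S ⊆ R.Φ ∧ IsAntisymSet S ∧ R.IsClosedSubset S

/-- Closure: roots that are nonnegative integer combinations (multiset sums) of elements of `T`. -/
def RootSys.clos (R : RootSys V) (T : Set V) : Set V :=
  {γ ∈ R.Φ | ∃ M : Multiset V, (∀ x ∈ M, x ∈ T) ∧ M.sum = γ}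

/-- Nonnegative integer combinations (multiset sums) of elements of `T`. -/
def nncomb (T : Set V) : Set V :=
  {v | ∃ M : Multiset V, (∀ x ∈ M, x ∈ T) ∧ M.sum = v}

/-- A root system equipped with a generic linear functional determining positive roots. -/
structure PosRootSys (V : Type*) [NormedAddCommGroup V] [InnerProductSpace ℝ V]
    extends RootSys V where
  f : V →ₗ[ℝ] ℝ
  generic : ∀ α ∈ Φ, f α ≠ 0

def PosRootSys.Pos (P : PosRootSys V) : Set V := {α ∈ P.Φ | 0 < P.f α}

def PosRootSys.Neg (P : PosRootSys V) : Set V := {α ∈ P.Φ | P.f α < 0}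

/-- The weak order: `R ≼ S` iff `R⁺ ⊇ S⁺` and `R⁻ ⊆ S⁻`. -/
def PosRootSys.wle (P : PosRootSys V) (R S : Set V) : Prop :=
  S ∩ P.Pos ⊆ R ∩ P.Pos ∧ R ∩ P.Neg ⊆ S ∩ P.Neg

/-- `R` is semiclosed if both `R⁺` and `R⁻` are closed. -/
def PosRootSys.SemiClosed (P : PosRootSys V) (S : Set V) : Prop :=
  S ⊆ P.Φ ∧ P.toRootSys.IsClosedSubset (S ∩ P.Pos) ∧
    P.toRootSys.IsClosedSubset (S ∩ P.Neg)

/-- Negative closure deletion. -/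
def PosRootSys.ncd (P : PosRootSys V) (S : Set V) : Set V :=
  S \ {α | α ∈ S ∩ P.Neg ∧ ∃ X : Finset V, ↑X ⊆ S ∩ P.Pos ∧ α + X.sum id ∈ P.Φ \ S}

/-- Positive closure deletion. -/
def PosRootSys.pcd (P : PosRootSys V) (S : Set V) : Set V :=
  S \ {α | α ∈ S ∩ P.Pos ∧ ∃ X : Finset V, ↑X ⊆ S ∩ P.Neg ∧ α + X.sum id ∈ P.Φ \ S}

/-- Meet formula on closed subsets. -/
def PosRootSys.wmeet (P : PosRootSys V) (R S : Set V) : Set V :=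
  P.ncd (P.toRootSys.clos ((R ∪ S) ∩ P.Pos) ∪ ((R ∩ S) ∩ P.Neg))

/-- Join formula on closed subsets. -/
def PosRootSys.wjoin (P : PosRootSys V) (R S : Set V) : Set V :=
  P.pcd (((R ∩ S) ∩ P.Pos) ∪ P.toRootSys.clos ((R ∪ S) ∩ P.Neg))

/-!
Let `σ` be the sum of `X` and `α ∈ X`. Some `δ ∈ X \ {α}` has `σ - δ` a root: otherwise
`⟪σ, δ⟫ ≤ 0` for all those `δ` (a positive product would make `σ - δ` a root), so with
`τ = σ - α` we get `⟪α, τ⟫ = ⟪σ, τ⟫ - ‖τ‖² < 0`. Hence `⟪α, γ⟫ < 0` for some `γ`, `α + γ` is a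
root, and merging `α` and `γ` gives a shorter family with the same sum, to which induction
applies. Removing such roots one at a time yields, for every `δ ∈ X` and every size `k`, a
summable subset of size `k` through `δ`. For the theorem, remove one `δ` keeping `X \ {δ}`
summable, take the `p - 1` subsets of `X \ {δ}` given by induction, and add one of the right
size through `δ`.
-/

namespace Multiset

variable {M : Type*} [AddCommMonoid M]

def NoZeroSubsum (s : Multiset M) : Prop :=
  ∀ t ≤ s, t ≠ 0 → t.sum ≠ 0

theorem NoZeroSubsum.mono {s t : Multiset M} (hs : s.NoZeroSubsum) (hts : t ≤ s) :
    t.NoZeroSubsum :=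
  fun u hu => hs u (hu.trans hts)

theorem NoZeroSubsum.add_cons {a b : M} {s : Multiset M} (h : (a ::ₘ b ::ₘ s).NoZeroSubsum) :
    ((a + b) ::ₘ s).NoZeroSubsum := by
  intro t ht ht0
  by_cases hab : a + b ∈ t
  · obtain ⟨u, rfl⟩ := exists_cons_of_mem hab
    have hu : a ::ₘ b ::ₘ u ≤ a ::ₘ b ::ₘ s := by simpa using ht
    simpa [add_assoc] using h _ hu cons_ne_zero
  · have hts : t ≤ s := (le_cons_of_notMem hab).1 ht
    exact h t (hts.trans ((le_cons_self _ _).trans (le_cons_self _ _))) ht0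

end Multiset

theorem Finset.noZeroSubsum_val {M : Type*} [AddCommMonoid M] {X : Finset M}
    (h : ∀ Y ⊆ X, Y.Nonempty → Y.sum id ≠ 0) : X.val.NoZeroSubsum := by
  intro t ht ht0
  simpa [← Finset.sum_val] using
    h ⟨t, Multiset.nodup_of_le ht X.nodup⟩ (Finset.val_le_iff.1 ht)
      (Finset.nonempty_iff_ne_empty.2 (by simpa [← Finset.val_eq_zero] using ht0))

open InnerProductSpace Multiset

theorem real_inner_multiset_sum (x : V) (s : Multiset V) :
    ⟪x, s.sum⟫_ℝ = (s.map (⟪x, ·⟫_ℝ)).sum :=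
  map_multiset_sum (innerₗ V x) s

namespace RootSys

variable (R : RootSys V)

theorem neg_mem {α : V} (hα : α ∈ R.Φ) : -α ∈ R.Φ := by
  have h : -α ∈ R.Φ ∩ {x : V | ∃ t : ℝ, x = t • α} := by
    rw [R.line α hα]; simp
  exact h.1

theorem eq_or_eq_neg_of_eq_smul {α β : V} (hα : α ∈ R.Φ) (hβ : β ∈ R.Φ) {t : ℝ}
    (ht : β = t • α) : β = α ∨ β = -α := by
  have h : β ∈ R.Φ ∩ {x : V | ∃ t : ℝ, x = t • α} := ⟨hβ, t, ht⟩
  simpa [R.line α hα] using h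

theorem inner_sq_lt {α β : V} (hα : α ∈ R.Φ) (hβ : β ∈ R.Φ) (hne : β ≠ α) (hne' : β ≠ -α) :
    ⟪α, β⟫_ℝ ^ 2 < ⟪α, α⟫_ℝ * ⟪β, β⟫_ℝ := by
  refine lt_of_le_of_ne (by simpa [sq] using real_inner_mul_inner_self_le α β) fun h => ?_
  have hcs : ‖⟪α, β⟫_ℝ‖ = ‖α‖ * ‖β‖ := by
    rw [Real.norm_eq_abs, ← sq_eq_sq₀ (abs_nonneg _) (by positivity), sq_abs, h, mul_pow,
      real_inner_self_eq_norm_sq, real_inner_self_eq_norm_sq]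
  obtain ⟨r, -, hr⟩ := (norm_inner_eq_norm_iff (R.nonzero α hα) (R.nonzero β hβ)).1 hcs
  exact (R.eq_or_eq_neg_of_eq_smul hα hβ hr).elim hne hne'

theorem sub_mem_of_inner_pos (hcr : R.IsCrystallographic) {α β : V} (hα : α ∈ R.Φ)
    (hβ : β ∈ R.Φ) (hpos : 0 < ⟪α, β⟫_ℝ) (hne : α ≠ β) : α - β ∈ R.Φ := by
  have hne' : β ≠ -α := by
    rintro rfl
    simp only [inner_neg_right, Left.neg_pos_iff] at hpos
    exact (real_inner_self_pos.2 (R.nonzero α hα)).not_gt hpos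
  have ha := real_inner_self_pos.2 (R.nonzero α hα)
  have hb := real_inner_self_pos.2 (R.nonzero β hβ)
  obtain ⟨m, hm⟩ := hcr β hβ α hα
  obtain ⟨n, hn⟩ := hcr α hα β hβ
  rw [real_inner_comm] at hm
  have hm' : 2 * ⟪α, β⟫_ℝ = m * ⟪β, β⟫_ℝ := by rwa [div_eq_iff hb.ne'] at hm
  have hn' : 2 * ⟪α, β⟫_ℝ = n * ⟪α, α⟫_ℝ := by rwa [div_eq_iff ha.ne'] at hn
  have hm1 : 1 ≤ m := by
    have : (0 : ℝ) < m := by nlinarith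
    exact_mod_cast this
  have hn1 : 1 ≤ n := by
    have : (0 : ℝ) < n := by nlinarith
    exact_mod_cast this
  -- the product of the two Cartan integers is `4 cos² θ < 4`
  have hmn : m * n < 4 := by
    have hcs := R.inner_sq_lt hα hβ (Ne.symm hne) hne'
    have : (m * n : ℝ) < 4 := by nlinarith [mul_pos ha hb]
    exact_mod_cast this
  rcases (show m = 1 ∨ n = 1 by
    by_contra! h
    obtain ⟨hm2, hn2⟩ : 2 ≤ m ∧ 2 ≤ n := by omega
    nlinarith) with h | h
  · have hr := R.reflect β hβ α hα
    rwa [real_inner_comm α β, hm, h, Int.cast_one, one_smul] at hr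
  · have hr := R.neg_mem (R.reflect α hα β hβ)
    rwa [hn, h, Int.cast_one, one_smul, neg_sub] at hr

theorem add_mem_of_inner_neg (hcr : R.IsCrystallographic) {α β : V} (hα : α ∈ R.Φ)
    (hβ : β ∈ R.Φ) (hneg : ⟪α, β⟫_ℝ < 0) (hne : α + β ≠ 0) : α + β ∈ R.Φ := by
  simpa using R.sub_mem_of_inner_pos hcr hα (R.neg_mem hβ) (by simpa using hneg)
    (by rintro rfl; simp at hne)

theorem exists_inner_neg_of_forall_sub_notMem (hcr : R.IsCrystallographic) {α : V}
    {s : Multiset V} (hroots : ∀ x ∈ α ::ₘ s, x ∈ R.Φ) (hsum : (α ::ₘ s).sum ∈ R.Φ)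
    (hnz : (α ::ₘ s).NoZeroSubsum) (hs : s ≠ 0)
    (hbad : ∀ δ ∈ s, (α ::ₘ s).sum - δ ∉ R.Φ) : ∃ γ ∈ s, ⟪α, γ⟫_ℝ < 0 := by
  set σ := (α ::ₘ s).sum with hσ
  have hσδ : ∀ δ ∈ s, ⟪-σ, δ⟫_ℝ ≥ 0 := by
    intro δ hδ
    by_contra! hpos
    rw [inner_neg_left, Left.neg_neg_iff] at hpos
    obtain ⟨t, rfl⟩ := exists_cons_of_mem hδ
    refine hbad δ hδ (R.sub_mem_of_inner_pos hcr hsum (hroots δ (by simp)) hpos fun h => ?_)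
    refine hnz (α ::ₘ t) (by simp [le_cons_self]) cons_ne_zero ?_
    simpa [hσ, add_left_comm α δ] using h
  have hτ : s.sum ≠ 0 := hnz s (le_cons_self _ _) hs
  have hστ : ⟪σ, s.sum⟫_ℝ ≤ 0 := by
    have := sum_nonneg (s := s.map (⟪-σ, ·⟫_ℝ)) (by simpa using hσδ)
    rw [← real_inner_multiset_sum, inner_neg_left] at this
    linarith
  have hατ : ⟪α, s.sum⟫_ℝ < 0 := by
    have h : ⟪α, s.sum⟫_ℝ = ⟪σ, s.sum⟫_ℝ - ⟪s.sum, s.sum⟫_ℝ := by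
      rw [hσ, sum_cons, inner_add_left]; ring
    linarith [real_inner_self_pos.2 hτ]
  by_contra! h
  rw [real_inner_multiset_sum] at hατ
  exact hατ.not_ge (sum_nonneg (by simpa using h))

theorem exists_sub_mem_of_cons (hcr : R.IsCrystallographic) (α : V) (s : Multiset V)
    (hroots : ∀ x ∈ α ::ₘ s, x ∈ R.Φ) (hsum : (α ::ₘ s).sum ∈ R.Φ)
    (hnz : (α ::ₘ s).NoZeroSubsum) (hs : s ≠ 0) : ∃ δ ∈ s, (α ::ₘ s).sum - δ ∈ R.Φ := by
  induction s using Multiset.strongInductionOn generalizing α with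
  | ih s ih =>
  by_contra! hbad
  obtain ⟨γ, hγ, hneg⟩ :=
    R.exists_inner_neg_of_forall_sub_notMem hcr hroots hsum hnz hs hbad
  obtain ⟨t, rfl⟩ := exists_cons_of_mem hγ
  rcases eq_or_ne t 0 with rfl | ht
  · exact hbad γ hγ (by simpa using hroots α (mem_cons_self _ _))
  have hαγ : α + γ ∈ R.Φ :=
    R.add_mem_of_inner_neg hcr (hroots α (by simp)) (hroots γ (by simp)) hneg
      (by simpa using hnz {α, γ} (by simp) (by simp))
  have hsum_eq : ((α + γ) ::ₘ t).sum = (α ::ₘ γ ::ₘ t).sum := by simp [add_assoc]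
  have hroots' : ∀ x ∈ (α + γ) ::ₘ t, x ∈ R.Φ := by
    simp only [mem_cons, forall_eq_or_imp] at hroots ⊢
    exact ⟨hαγ, hroots.2.2⟩
  obtain ⟨δ, hδ, hδΦ⟩ :=
    ih t (lt_cons_self t γ) (α + γ) hroots' (hsum_eq ▸ hsum) hnz.add_cons ht
  exact hbad δ (mem_cons_of_mem hδ) (hsum_eq ▸ hδΦ)

variable [DecidableEq V]

theorem exists_erase_sum_mem (hcr : R.IsCrystallographic) {X : Finset V} (hX : ↑X ⊆ R.Φ)
    (hsum : X.sum id ∈ R.Φ) (hnz : X.val.NoZeroSubsum) {α : V} (hα : α ∈ X)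
    (hcard : 2 ≤ X.card) : ∃ δ ∈ X.erase α, (X.erase δ).sum id ∈ R.Φ := by
  have hval : X.val = α ::ₘ (X.erase α).val := by rw [Finset.erase_val, cons_erase hα]
  have hs : (X.erase α).val ≠ 0 := by
    rw [Ne, Finset.val_eq_zero, ← Finset.card_eq_zero, Finset.card_erase_of_mem hα]
    omega
  rw [← Finset.sum_val, hval] at hsum
  rw [hval] at hnz
  obtain ⟨δ, hδ, hδΦ⟩ := R.exists_sub_mem_of_cons hcr α _
    (fun x hx => hX (by rw [← hval] at hx; exact hx)) hsum hnz hs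
  refine ⟨δ, hδ, ?_⟩
  rwa [Finset.sum_erase_eq_sub (Finset.mem_of_mem_erase hδ), ← Finset.sum_val, hval]

theorem exists_subset_card_eq_sum_mem_of_mem (hcr : R.IsCrystallographic) {X : Finset V}
    (hX : ↑X ⊆ R.Φ) (hsum : X.sum id ∈ R.Φ) (hnz : X.val.NoZeroSubsum) {α : V} (hα : α ∈ X)
    {k : ℕ} (hk : 1 ≤ k) (hkX : k ≤ X.card) :
    ∃ Y ⊆ X, α ∈ Y ∧ Y.card = k ∧ Y.sum id ∈ R.Φ := by
  induction X using Finset.strongInduction with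
  | H X ih =>
  rcases hkX.eq_or_lt with rfl | hlt
  · exact ⟨X, subset_rfl, hα, rfl, hsum⟩
  obtain ⟨δ, hδ, hδΦ⟩ := R.exists_erase_sum_mem hcr hX hsum hnz hα (by omega)
  obtain ⟨hδα, hδX⟩ := Finset.mem_erase.1 hδ
  obtain ⟨Y, hYX, hαY, hYcard, hYsum⟩ := ih (X.erase δ) (Finset.erase_ssubset hδX)
    ((Finset.coe_subset.2 (Finset.erase_subset δ X)).trans hX) hδΦ
    (hnz.mono (by simp [Finset.erase_val, erase_le])) (Finset.mem_erase.2 ⟨hδα.symm, hα⟩)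
    (by rw [Finset.card_erase_of_mem hδX]; omega)
  exact ⟨Y, hYX.trans (Finset.erase_subset δ X), hαY, hYcard, hYsum⟩

theorem exists_subsets_card_eq_sum_mem (hcr : R.IsCrystallographic) {X : Finset V}
    (hX : ↑X ⊆ R.Φ) (hsum : X.sum id ∈ R.Φ) (hnz : X.val.NoZeroSubsum) {p : ℕ}
    (hp : p ≤ X.card) : ∃ S : Finset (Finset V), p ≤ S.card ∧
      ∀ Y ∈ S, Y ⊆ X ∧ Y.card = X.card - p + 1 ∧ Y.sum id ∈ R.Φ := by
  induction p generalizing X with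
  | zero => exact ⟨∅, le_rfl, by simp⟩
  | succ p ih =>
  rcases Nat.eq_zero_or_pos p with rfl | hp0
  · exact ⟨{X}, le_rfl, by simpa [Nat.sub_add_cancel hp] using hsum⟩
  obtain ⟨α, hα⟩ : X.Nonempty := Finset.card_pos.1 (by omega)
  obtain ⟨δ, hδ, hδΦ⟩ := R.exists_erase_sum_mem hcr hX hsum hnz hα (by omega)
  have hδX := Finset.mem_of_mem_erase hδ
  have hcard := Finset.card_erase_of_mem hδX
  obtain ⟨S, hS, hSX⟩ := ih ((Finset.coe_subset.2 (Finset.erase_subset δ X)).trans hX) hδΦ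
    (hnz.mono (by simp [Finset.erase_val, erase_le])) (by omega)
  obtain ⟨Z, hZX, hδZ, hZcard, hZsum⟩ :=
    R.exists_subset_card_eq_sum_mem_of_mem hcr hX hsum hnz hδX (k := X.card - (p + 1) + 1)
      (by omega) (by omega)
  have hZS : Z ∉ S := fun hZ => Finset.notMem_erase δ X ((hSX Z hZ).1 hδZ)
  refine ⟨insert Z S, by rw [Finset.card_insert_of_notMem hZS]; omega, ?_⟩
  simp only [Finset.mem_insert, forall_eq_or_imp]
  refine ⟨⟨hZX, hZcard, hZsum⟩, fun Y hY => ?_⟩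
  obtain ⟨hYX, hYcard, hYsum⟩ := hSX Y hY
  exact ⟨hYX.trans (Finset.erase_subset δ X), by omega, hYsum⟩

end RootSys

theorem stmt3_general (R : RootSys V) (hcr : R.IsCrystallographic)
    (X : Finset V) (hX : ↑X ⊆ R.Φ) (hsum : X.sum id ∈ R.Φ)
    (hnv : ∀ Y ⊆ X, Y.Nonempty → Y.sum id ≠ 0)
    (p : ℕ) (hp2 : p ≤ X.card) :
    ∃ S : Finset (Finset V), p ≤ S.card ∧
      ∀ Y ∈ S, Y ⊆ X ∧ Y.card = X.card - p + 1 ∧ Y.sum id ∈ R.Φ := by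
  classical
  exact R.exists_subsets_card_eq_sum_mem hcr hX hsum (Finset.noZeroSubsum_val hnv) hp2

theorem stmt3 (R : RootSys V) (hcr : R.IsCrystallographic)
    (X : Finset V) (hX : ↑X ⊆ R.Φ) (hsum : X.sum id ∈ R.Φ)
    (hnv : ∀ Y ⊆ X, Y.Nonempty → Y.sum id ≠ 0)
    (p : ℕ) (hp1 : 1 ≤ p) (hp2 : p ≤ X.card) :
    ∃ S : Finset (Finset V), p ≤ S.card ∧
      ∀ Y ∈ S, Y ⊆ X ∧ Y.card = X.card - p + 1 ∧ Y.sum id ∈ R.Φ :=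
  stmt3_general R hcr X hX hsum hnv p hp2
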